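/- Let m ≥ 1 and let A = {1 = a_1 < ... < a_m < â_m < a_{m+1} < ... < a_{2m}} be a symmetric base of odd size k = 2m+1 with a_i ≤ 3·a_{i-1} for 2 ≤ i ≤ m and â_m = a_m + x where 0 < x ≤ 2·a_m. Then A is compact: every integer n with 0 ≤ n ≤ (2m+1)·(â_m + a_m) can be written as a sum of at most 2m+1 elements of A, with repetition allowed. -/

import Mathlib

/-- `n` can be written as a sum of at most `t` elements of `A`, with repetition. -/
def CanRep (A : Finset ℕ) (t n : ℕ) : Prop :=
  ∃ l : Multiset ℕ, (∀ x ∈ l, x ∈ A) ∧ Multiset.card l ≤ t ∧ l.sum = n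

/-!
Put `M = b + a m = a (2 * m)` and `T = {a 1, …, a m}`; the base contains `T`, `M` and every
`M - x` with `x ∈ T`. Since `a (i + 1) ≤ 3 * a i`, greedy digits write every `v < (c + 1) * a j`
as a sum of at most `c + 2 * (j - 1)` elements of `{a 1, …, a j}`. A finer induction on `j`
writes every `g ≤ a j` as a difference `Σ u - Σ v` of such sums with `|u| ≤ k` and
`|v| ≤ 2 * j - 2 - k`, for any prescribed `k ≥ 1`.

Now write `n = t * M - f` with `0 ≤ f < M ≤ 4 * a m`. If `f ≤ t * a m`, peel copies of `a m` off
`f` to get `f = Σ u - Σ v` with `|u| ≤ t` and `|v| ≤ 2 * m + 1 - t`, and then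
`n = Σ_{x ∈ u} (M - x) + (t - |u|) * M + Σ v` uses at most `2 * m + 1` summands. Otherwise
`t ≤ 3` and `n = (t - 1) * M + r` with `r < (4 - t) * a m`, which the digit bound covers.
-/

open Finset

theorem exists_mul_lt_le_mul_add {d g : ℕ} (hd : 0 < d) (hg : 0 < g) :
    ∃ c, c * d < g ∧ g ≤ c * d + d :=
  ⟨(g - 1) / d, by have := Nat.div_mul_le_self (g - 1) d; omega,
    by have := Nat.lt_div_mul_add (a := g - 1) hd; omega⟩

theorem exists_add_eq_mul {M : ℕ} (hM : 0 < M) (n : ℕ) : ∃ t f, f < M ∧ n + f = t * M := by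
  have := Nat.div_add_mod' (n + (M - 1)) M
  have := Nat.mod_lt (n + (M - 1)) hM
  exact ⟨(n + (M - 1)) / M, M - 1 - (n + (M - 1)) % M, by omega, by omega⟩

theorem canRep_zero (A : Finset ℕ) (t : ℕ) : CanRep A t 0 :=
  ⟨0, by simp, by simp, rfl⟩

theorem canRep_mul {A : Finset ℕ} {x : ℕ} (hx : x ∈ A) (c : ℕ) : CanRep A c (c * x) :=
  ⟨Multiset.replicate c x, fun _ hy => Multiset.eq_of_mem_replicate hy ▸ hx, by simp, by simp⟩

theorem canRep_of_mem {A : Finset ℕ} {x : ℕ} (hx : x ∈ A) : CanRep A 1 x := by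
  simpa using canRep_mul hx 1

namespace CanRep

variable {A B : Finset ℕ} {s t n n' : ℕ}

theorem mono (hAB : A ⊆ B) (hst : s ≤ t) (h : CanRep A s n) : CanRep B t n := by
  obtain ⟨l, hl, hc, rfl⟩ := h
  exact ⟨l, fun x hx => hAB (hl x hx), hc.trans hst, rfl⟩

theorem add (h : CanRep A s n) (h' : CanRep A t n') : CanRep A (s + t) (n + n') := by
  obtain ⟨l, hl, hc, rfl⟩ := h
  obtain ⟨l', hl', hc', rfl⟩ := h'
  refine ⟨l + l', fun x hx => ?_, by simpa using add_le_add hc hc', Multiset.sum_add l l'⟩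
  rcases Multiset.mem_add.1 hx with hx | hx
  exacts [hl x hx, hl' x hx]

theorem le_mul {M : ℕ} (hA : ∀ x ∈ A, x ≤ M) (h : CanRep A t n) : n ≤ t * M := by
  obtain ⟨l, hl, hc, rfl⟩ := h
  calc l.sum ≤ Multiset.card l • M := Multiset.sum_le_card_nsmul l M fun x hx => hA x (hl x hx)
    _ ≤ t * M := Nat.mul_le_mul_right M hc

theorem mul_sub {M : ℕ} (hM : M ∈ B) (hA : ∀ x ∈ A, x ≤ M ∧ M - x ∈ B) (h : CanRep A t n) :
    CanRep B t (t * M - n) := by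
  obtain ⟨l, hl, hc, rfl⟩ := h
  have hreflect : CanRep B (Multiset.card l) (Multiset.card l * M - l.sum) := by
    refine ⟨l.map (M - ·), fun y hy => ?_, by simp, ?_⟩
    · obtain ⟨x, hx, rfl⟩ := Multiset.mem_map.1 hy
      exact (hA x (hl x hx)).2
    · rw [Multiset.sum_map_tsub l fun x hx => (hA x (hl x hx)).1]
      simp
  have hle : l.sum ≤ Multiset.card l * M := le_mul (fun x hx => (hA x hx).1) ⟨l, hl, le_rfl, rfl⟩
  have hsplit : Multiset.card l * M + (t - Multiset.card l) * M = t * M := by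
    rw [← add_mul, Nat.add_sub_cancel' hc]
  have h := hreflect.add (canRep_mul hM (t - Multiset.card l))
  rwa [Nat.add_sub_cancel' hc, show Multiset.card l * M - l.sum + (t - Multiset.card l) * M
    = t * M - l.sum by omega] at h

theorem of_lt_succ_mul {d N : ℕ} (hd : d ∈ A) (h : ∀ v < d, CanRep A N v) (c : ℕ) {v : ℕ}
    (hv : v < (c + 1) * d) : CanRep A (c + N) v := by
  induction c generalizing v with
  | zero => simpa using h v (by simpa using hv)
  | succ c ih =>
    by_cases hvd : v < d
    · exact (h v hvd).mono subset_rfl (by omega)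
    have h' := (canRep_of_mem hd).add (ih (v := v - d) (by rw [add_one_mul] at hv; omega))
    rwa [show 1 + (c + N) = c + 1 + N by omega, show d + (v - d) = v by omega] at h'

end CanRep

/-- `g = Σ u - Σ v` for multisets `u`, `v` of elements of `A` with `|u| ≤ k` and `|v| ≤ s`. -/
def CanRepDiff (A : Finset ℕ) (k s g : ℕ) : Prop :=
  ∃ p, CanRep A k (g + p) ∧ CanRep A s p

theorem canRepDiff_zero (A : Finset ℕ) (k s : ℕ) : CanRepDiff A k s 0 :=
  ⟨0, canRep_zero A k, canRep_zero A s⟩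

namespace CanRepDiff

variable {A B : Finset ℕ} {k k' s s' g : ℕ}

theorem mono (hAB : A ⊆ B) (hk : k ≤ k') (hs : s ≤ s') (h : CanRepDiff A k s g) :
    CanRepDiff B k' s' g := by
  obtain ⟨p, h₁, h₂⟩ := h
  exact ⟨p, h₁.mono hAB hk, h₂.mono hAB hs⟩

theorem of_sub_mul {c d : ℕ} (hd : d ∈ A) (hck : c ≤ k) (hcg : c * d ≤ g)
    (h : CanRepDiff A (k - c) s (g - c * d)) : CanRepDiff A k s g := by
  obtain ⟨p, h₁, h₂⟩ := h
  refine ⟨p, ?_, h₂⟩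
  have h' := (canRep_mul hd c).add h₁
  rwa [Nat.add_sub_cancel' hck, show c * d + (g - c * d + p) = g + p by omega] at h'

theorem canRep_mul_sub {M : ℕ} (hM : M ∈ B) (hA : ∀ x ∈ A, x ≤ M ∧ M - x ∈ B) (hAB : A ⊆ B)
    (h : CanRepDiff A k s g) : CanRep B (k + s) (k * M - g) := by
  obtain ⟨p, h₁, h₂⟩ := h
  have hle := h₁.le_mul fun x hx => (hA x hx).1
  have h' := (h₁.mul_sub hM hA).add (h₂.mono hAB le_rfl)
  rwa [show k * M - (g + p) + p = k * M - g by omega] at h'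

end CanRepDiff

theorem apply_mem_image_Icc (a : ℕ → ℕ) {i j : ℕ} (hi : 1 ≤ i) (hij : i ≤ j) :
    a i ∈ (Icc 1 j).image a :=
  mem_image_of_mem a (mem_Icc.2 ⟨hi, hij⟩)

section Chain

variable {m : ℕ} {a : ℕ → ℕ}

theorem monotoneOn_Icc_of_lt_pred (hmono : ∀ i, 2 ≤ i → i ≤ m → a (i - 1) < a i) :
    MonotoneOn a (Set.Icc 1 m) := by
  rintro i ⟨hi, -⟩ j ⟨-, hjm⟩ hij
  induction j, hij using Nat.le_induction with
  | base => exact le_rfl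
  | succ j hij ih => exact (ih (by omega)).trans (by simpa using (hmono (j + 1) (by omega) hjm).le)

theorem canRep_of_lt_succ_mul (ha1 : a 1 = 1) (h3 : ∀ i, 2 ≤ i → i ≤ m → a i ≤ 3 * a (i - 1))
    {j : ℕ} (hj : 1 ≤ j) (hjm : j ≤ m) (c : ℕ) {v : ℕ} (hv : v < (c + 1) * a j) :
    CanRep ((Icc 1 j).image a) (c + 2 * (j - 1)) v := by
  induction j, hj using Nat.le_induction generalizing c v with
  | base =>
    have h0 : ∀ v < a 1, CanRep ((Icc 1 1).image a) 0 v := fun v hv => by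
      rw [show v = 0 by omega]
      exact canRep_zero _ _
    simpa using CanRep.of_lt_succ_mul (apply_mem_image_Icc a le_rfl le_rfl) h0 c hv
  | succ j hj ih =>
    have hJ := h3 (j + 1) (by omega) hjm
    rw [Nat.add_sub_cancel] at hJ
    have hsub : (Icc 1 j).image a ⊆ (Icc 1 (j + 1)).image a :=
      image_subset_image (Icc_subset_Icc_right (by omega))
    have hlt : ∀ v < a (j + 1), CanRep ((Icc 1 (j + 1)).image a) (2 * j) v := fun v hv =>
      (ih (by omega) 2 (by omega)).mono hsub (by omega)
    simpa using CanRep.of_lt_succ_mul (apply_mem_image_Icc a (by omega) le_rfl) hlt c hv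

theorem canRepDiff_of_le (ha1 : a 1 = 1) (h3 : ∀ i, 2 ≤ i → i ≤ m → a i ≤ 3 * a (i - 1))
    {j : ℕ} (hj : 1 ≤ j) (hjm : j ≤ m) {k g : ℕ} (hk : 1 ≤ k) (hg : g ≤ a j) :
    CanRepDiff ((Icc 1 j).image a) k (2 * j - 2 - k) g := by
  induction j, hj using Nat.le_induction generalizing k g with
  | base =>
    have h := canRep_mul (apply_mem_image_Icc a le_rfl le_rfl) g
    rw [ha1, mul_one] at h
    exact ⟨0, h.mono subset_rfl (by omega), canRep_zero _ _⟩
  | succ j hj ih =>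
    have hJ := h3 (j + 1) (by omega) hjm
    rw [Nat.add_sub_cancel] at hJ
    have hsub : (Icc 1 j).image a ⊆ (Icc 1 (j + 1)).image a :=
      image_subset_image (Icc_subset_Icc_right (by omega))
    rcases g.eq_zero_or_pos with rfl | hg0
    · exact canRepDiff_zero _ _ _
    obtain ⟨c, hcg, hgc⟩ := exists_mul_lt_le_mul_add (d := a j) (by omega) hg0
    have hc : c < 3 := Nat.lt_of_mul_lt_mul_right (a := a j) (by omega)
    rcases lt_or_ge c k with hck | hkc
    · exact ((ih (by omega) (k := k - c) (g := g - c * a j) (by omega) (by omega)).mono hsub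
        le_rfl (by omega)).of_sub_mul (apply_mem_image_Icc a hj (by omega)) hck.le hcg.le
    · -- `g` exceeds `k * a j`, so `a (j + 1)` overshoots it by less than `(3 - k) * a j`
      have hka : k * a j ≤ c * a j := Nat.mul_le_mul_right _ hkc
      have hv : a (j + 1) - g < (2 - k + 1) * a j := by
        have : k ≤ 2 := by omega
        interval_cases k <;> omega
      refine ⟨a (j + 1) - g, ?_, ?_⟩
      · rw [Nat.add_sub_cancel' hg]
        exact (canRep_of_mem (apply_mem_image_Icc a (by omega) le_rfl)).mono subset_rfl hk
      · exact (canRep_of_lt_succ_mul ha1 h3 hj (by omega) (2 - k) hv).mono hsub (by omega)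

theorem canRepDiff_of_le_mul (ha1 : a 1 = 1) (h3 : ∀ i, 2 ≤ i → i ≤ m → a i ≤ 3 * a (i - 1))
    (hm : 1 ≤ m) {t f : ℕ} (hft : f ≤ t * a m) (hf4 : f ≤ 4 * a m) :
    CanRepDiff ((Icc 1 m).image a) t (2 * m + 1 - t) f := by
  rcases f.eq_zero_or_pos with rfl | hf0
  · exact canRepDiff_zero _ _ _
  obtain ⟨c, hcf, hfc⟩ := exists_mul_lt_le_mul_add (d := a m) (by omega) hf0
  have hc : c < 4 := Nat.lt_of_mul_lt_mul_right (a := a m) (by omega)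
  have hct : c < t := Nat.lt_of_mul_lt_mul_right (a := a m) (by omega)
  exact ((canRepDiff_of_le ha1 h3 hm le_rfl (k := t - c) (g := f - c * a m) (by omega)
    (by omega)).mono subset_rfl le_rfl (by omega)).of_sub_mul (apply_mem_image_Icc a hm le_rfl)
    hct.le hcf.le

theorem sub_mem_insert_image_Icc {b : ℕ} (hmono : ∀ i, 2 ≤ i → i ≤ m → a (i - 1) < a i)
    (hsym : ∀ i, 1 ≤ i → i ≤ m - 1 → a (m + i) = b + a m - a (m - i)) :
    ∀ x ∈ (Icc 1 m).image a, x ≤ b + a m ∧ b + a m - x ∈ insert b ((Icc 1 (2 * m)).image a) := by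
  intro x hx
  obtain ⟨i, hi, rfl⟩ := mem_image.1 hx
  rw [mem_Icc] at hi
  have hle : a i ≤ a m := monotoneOn_Icc_of_lt_pred hmono ⟨hi.1, hi.2⟩ ⟨by omega, le_rfl⟩ hi.2
  refine ⟨by omega, ?_⟩
  rcases hi.2.eq_or_lt with rfl | hlt
  · rw [Nat.add_sub_cancel]
    exact mem_insert_self _ _
  · have h := hsym (m - i) (by omega) (by omega)
    rw [Nat.sub_sub_self hi.2] at h
    rw [← h]
    exact mem_insert_of_mem (apply_mem_image_Icc a (by omega) (by omega))

end Chain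

theorem stmt_3_general (m : ℕ) (hm : 1 ≤ m) (a : ℕ → ℕ) (b : ℕ)
    (ha1 : a 1 = 1)
    (hmono : ∀ i, 2 ≤ i → i ≤ m → a (i - 1) < a i)
    (h3 : ∀ i, 2 ≤ i → i ≤ m → a i ≤ 3 * a (i - 1))
    (hb2 : b ≤ a m + 2 * a m)
    (hsym : ∀ i, 1 ≤ i → i ≤ m - 1 → a (m + i) = b + a m - a (m - i))
    (h2m : a (2 * m) = b + a m) :
    ∀ n ≤ (2 * m + 1) * (b + a m),
      CanRep (insert b ((Finset.Icc 1 (2 * m)).image a)) (2 * m + 1) n := by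
  intro n hn
  have hT := sub_mem_insert_image_Icc hmono hsym
  have hTS : (Icc 1 m).image a ⊆ insert b ((Icc 1 (2 * m)).image a) :=
    (image_subset_image (Icc_subset_Icc_right (by omega))).trans (subset_insert _ _)
  have hMS : b + a m ∈ insert b ((Icc 1 (2 * m)).image a) :=
    h2m ▸ mem_insert_of_mem (apply_mem_image_Icc a (by omega) le_rfl)
  have ham : 1 ≤ a m := ha1 ▸ monotoneOn_Icc_of_lt_pred hmono ⟨le_rfl, hm⟩ ⟨hm, le_rfl⟩ hm
  set M := b + a m
  obtain ⟨t, f, hfM, hnf⟩ := exists_add_eq_mul (show 0 < M by omega) n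
  have ht : t < 2 * m + 2 := Nat.lt_of_mul_lt_mul_right (a := M) <| by
    have : (2 * m + 1) * M + M = (2 * m + 2) * M := by ring
    omega
  rcases le_or_gt f (t * a m) with hf | hf
  · have h := (canRepDiff_of_le_mul ha1 h3 hm hf (by omega)).canRep_mul_sub hMS hT hTS
    rwa [Nat.add_sub_cancel' (by omega), show t * M - f = n by omega] at h
  · have ht3 : t < 4 := Nat.lt_of_mul_lt_mul_right (a := a m) (by omega)
    have hr : M - f < (3 - t + 1) * a m := by interval_cases t <;> omega
    have h := (canRep_mul hMS (t - 1)).add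
      ((canRep_of_lt_succ_mul ha1 h3 hm le_rfl (3 - t) hr).mono hTS le_rfl)
    rw [show (t - 1) * M + (M - f) = n by interval_cases t <;> omega] at h
    exact h.mono subset_rfl (by omega)

theorem stmt_3 (m : ℕ) (hm : 1 ≤ m) (a : ℕ → ℕ) (b : ℕ)
    (ha1 : a 1 = 1)
    (hmono : ∀ i, 2 ≤ i → i ≤ m → a (i - 1) < a i)
    (h3 : ∀ i, 2 ≤ i → i ≤ m → a i ≤ 3 * a (i - 1))
    (hb : a m < b) (hb2 : b ≤ a m + 2 * a m)
    (hsym : ∀ i, 1 ≤ i → i ≤ m - 1 → a (m + i) = b + a m - a (m - i))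
    (h2m : a (2 * m) = b + a m) :
    ∀ n ≤ (2 * m + 1) * (b + a m),
      CanRep (insert b ((Finset.Icc 1 (2 * m)).image a)) (2 * m + 1) n :=
  stmt_3_general m hm a b ha1 hmono h3 hb2 hsym h2m
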